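/- Assume ι^{-1} : [v₁, ∞) → ℝ satisfies ι^{-1}(v) = ι^{-1}(v₁) + ∫_{v₁}^v (4r(v')/Ω²(v')) |ψ(v')|² dv' with ι^{-1}(v₁) ≥ 0, r(v') ≥ r_min > 0, Ω²(v') ≤ A e^{-bv'} (A, b > 0), and ∫_v^∞ |ψ|² dv' ≥ c v^{-p} for all large v (c, p > 0). Then ι^{-1}(v) → +∞ as v → +∞. -/

import Mathlib

/-- Blow-up of `ι⁻¹` at the Cauchy horizon: if
`ι⁻¹(v) = ι⁻¹(v₁) + ∫_{v₁}^v (4r/Ω²)|ψ|² dv'` with `ι⁻¹(v₁) ≥ 0`, `r ≥ r_min > 0`,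
`0 < Ω²(v) ≤ A e^{-bv}`, and `∫_v^∞ |ψ|² dv' ≥ c v^{-p}` for all large `v`, then
`ι⁻¹(v) → +∞` as `v → +∞`. -/
theorem iota_inverse_blowup (A b c p v₁ rmin : ℝ) (hA : 0 < A) (hb : 0 < b)
    (hc : 0 < c) (hp : 0 < p) (hrmin : 0 < rmin)
    (iotaInv Ω2 r : ℝ → ℝ) (ψ : ℝ → ℂ)
    (hψ : Measurable ψ)
    (h0 : 0 ≤ iotaInv v₁)
    (hΩpos : ∀ v ≥ v₁, 0 < Ω2 v)
    (hΩ : ∀ v ≥ v₁, Ω2 v ≤ A * Real.exp (-(b * v)))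
    (hr : ∀ v ≥ v₁, rmin ≤ r v)
    (hint : ∀ v ≥ v₁, IntervalIntegrable
      (fun v' => (4 * r v' / Ω2 v') * ‖ψ v'‖^2) MeasureTheory.volume v₁ v)
    (hrep : ∀ v ≥ v₁, iotaInv v
      = iotaInv v₁ + ∫ v' in v₁..v, (4 * r v' / Ω2 v') * ‖ψ v'‖^2)
    (hlow : ∃ V, ∀ v ≥ V, c * v ^ (-p) ≤ ∫ v' in Set.Ici v, ‖ψ v'‖^2) :
    Filter.Tendsto iotaInv Filter.atTop Filter.atTop := by
  obtain ⟨V, hV⟩ := hlow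
  set f : ℝ → ℝ := fun v' => (4 * r v' / Ω2 v') * ‖ψ v'‖^2 with hfdef
  set g : ℝ → ℝ := fun v' => ‖ψ v'‖^2 with hgdef
  have hgnn : ∀ x, 0 ≤ g x := fun x => sq_nonneg _
  have hfnn : ∀ x ≥ v₁, 0 ≤ f x := by
    intro x hx
    have h1 : (0:ℝ) ≤ 4 * r x := by linarith [hr x hx]
    exact mul_nonneg (div_nonneg h1 (hΩpos x hx).le) (sq_nonneg _)
  -- monotonicity of iotaInv on [v₁, ∞)
  have hmono : ∀ a ≥ v₁, ∀ v ≥ a, iotaInv a ≤ iotaInv v := by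
    intro a ha v hav
    have hv : v₁ ≤ v := ha.trans hav
    have h1 : IntervalIntegrable f MeasureTheory.volume v₁ a := hint a ha
    have h2 : IntervalIntegrable f MeasureTheory.volume a v := by
      apply (hint v hv).mono_set
      rw [Set.uIcc_of_le hav, Set.uIcc_of_le hv]
      exact Set.Icc_subset_Icc ha le_rfl
    have hadd := intervalIntegral.integral_add_adjacent_intervals h1 h2
    have hnn : 0 ≤ ∫ x in a..v, f x :=
      intervalIntegral.integral_nonneg hav (fun x hx => hfnn x (ha.trans hx.1))
    rw [hrep a ha, hrep v hv, ← hadd]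
    linarith
  rw [Filter.tendsto_atTop]
  intro M
  -- growth of exp(b u) / u^p
  have hCpos : (0:ℝ) < 2 * rmin * c / A := by positivity
  have hgrow : Filter.Tendsto (fun u : ℝ => (2 * rmin * c / A) * (Real.exp (b * u) / u ^ p))
      Filter.atTop Filter.atTop :=
    (tendsto_exp_mul_div_rpow_atTop p b hb).const_mul_atTop hCpos
  obtain ⟨u, hMu, huv₁, huV, hu1⟩ :=
    ((hgrow.eventually_ge_atTop M).and ((Filter.eventually_ge_atTop v₁).and
      ((Filter.eventually_ge_atTop V).and (Filter.eventually_ge_atTop 1)))).exists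
  have hupos : (0:ℝ) < u := lt_of_lt_of_le one_pos hu1
  -- g is integrable on [u, ∞)
  have gintIci : MeasureTheory.IntegrableOn g (Set.Ici u) MeasureTheory.volume := by
    by_contra hni
    have h1 := hV u huV
    rw [MeasureTheory.integral_undef hni] at h1
    have h2 : (0:ℝ) < c * u ^ (-p) := by positivity
    linarith
  -- the interval integrals of g converge to the full tail integral
  have hgtend : Filter.Tendsto (fun W : ℝ => ∫ x in u..W, g x) Filter.atTop
      (nhds (∫ x in Set.Ioi u, g x)) :=
    MeasureTheory.intervalIntegral_tendsto_integral_Ioi u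
      (gintIci.mono_set Set.Ioi_subset_Ici_self) Filter.tendsto_id
  have hhalf : c * u ^ (-p) / 2 < ∫ x in Set.Ioi u, g x := by
    rw [← MeasureTheory.integral_Ici_eq_integral_Ioi]
    have h1 := hV u huV
    have h2 : (0:ℝ) < c * u ^ (-p) := by positivity
    linarith
  obtain ⟨W, hWint, hWu⟩ :=
    ((hgtend.eventually_const_le hhalf).and (Filter.eventually_ge_atTop u)).exists
  have hWv₁ : v₁ ≤ W := huv₁.trans hWu
  -- the constant K
  set K : ℝ := 4 * rmin / (A * Real.exp (-(b * u))) with hKdef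
  have hKpos : 0 < K := by positivity
  -- interval integrability on [u, W]
  have hgint : IntervalIntegrable g MeasureTheory.volume u W := by
    apply MeasureTheory.IntegrableOn.intervalIntegrable
    rw [Set.uIcc_of_le hWu]
    exact gintIci.mono_set Set.Icc_subset_Ici_self
  have hfW : IntervalIntegrable f MeasureTheory.volume u W := by
    apply (hint W hWv₁).mono_set
    rw [Set.uIcc_of_le hWu, Set.uIcc_of_le hWv₁]
    exact Set.Icc_subset_Icc huv₁ le_rfl
  -- pointwise bound on [u, W]
  have hpt : ∀ x ∈ Set.Icc u W, K * g x ≤ f x := by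
    intro x hx
    have hxv₁ : v₁ ≤ x := huv₁.trans hx.1
    have hΩx := hΩpos x hxv₁
    have hΩle : Ω2 x ≤ A * Real.exp (-(b * u)) := by
      refine (hΩ x hxv₁).trans ?_
      have : Real.exp (-(b * x)) ≤ Real.exp (-(b * u)) := by
        apply Real.exp_le_exp.2
        nlinarith [hx.1]
      nlinarith
    have hdiv : K ≤ 4 * r x / Ω2 x := by
      apply div_le_div₀ (by linarith [hr x hxv₁]) (by linarith [hr x hxv₁]) hΩx hΩle
    exact mul_le_mul_of_nonneg_right hdiv (hgnn x)
  -- integrate the bound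
  have hKg : IntervalIntegrable (fun x => K * g x) MeasureTheory.volume u W :=
    hgint.const_mul K
  have hlb : K * (c * u ^ (-p) / 2) ≤ ∫ x in u..W, f x := by
    calc K * (c * u ^ (-p) / 2) ≤ K * ∫ x in u..W, g x :=
          mul_le_mul_of_nonneg_left hWint hKpos.le
      _ = ∫ x in u..W, K * g x := (intervalIntegral.integral_const_mul K g).symm
      _ ≤ ∫ x in u..W, f x := intervalIntegral.integral_mono_on hWu hKg hfW hpt
  -- identify the constant
  have hKc : K * (c * u ^ (-p) / 2) = (2 * rmin * c / A) * (Real.exp (b * u) / u ^ p) := by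
    rw [hKdef, Real.rpow_neg hupos.le, Real.exp_neg]
    have h1 : (0:ℝ) < u ^ p := Real.rpow_pos_of_pos hupos p
    have h2 : (0:ℝ) < Real.exp (b * u) := Real.exp_pos _
    field_simp
    ring
  -- lower bound on iotaInv W
  have hW1 : IntervalIntegrable f MeasureTheory.volume v₁ u := hint u huv₁
  have hadd := intervalIntegral.integral_add_adjacent_intervals hW1 hfW
  have hnn1 : 0 ≤ ∫ x in v₁..u, f x :=
    intervalIntegral.integral_nonneg huv₁ (fun x hx => hfnn x hx.1)
  have hWlb : M ≤ iotaInv W := by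
    rw [hrep W hWv₁, ← hadd]
    have : M ≤ ∫ x in u..W, f x := by
      calc M ≤ (2 * rmin * c / A) * (Real.exp (b * u) / u ^ p) := hMu
        _ = K * (c * u ^ (-p) / 2) := hKc.symm
        _ ≤ _ := hlb
    linarith
  filter_upwards [Filter.eventually_ge_atTop W] with v hv
  exact hWlb.trans (hmono W hWv₁ v hv)
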